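/- Let A be a separable Frobenius algebra over k with separability idempotent p, let V be a right A-module and W a left A-module. Then the map e : V ⊗ W → V ⊗ W given by v ⊗ w ↦ Σ (v · p⁽¹⁾) ⊗ (p⁽²⁾ · w) is idempotent, and its image (equivalently any retract of e) is a coequalizer of the two maps ρ ⊗ id, id ⊗ λ : V ⊗ A ⊗ W → V ⊗ W; hence it computes the relative tensor product V ⊗_A W. -/
import Mathlib


open TensorProduct

/-- For a separable Frobenius algebra `A` over `k`, a right `A`-module
`V` and a left `A`-module `W`, the map `e : v ⊗ w ↦ Σ (v·p⁽¹⁾) ⊗ (p⁽²⁾·w)` (with `p = s 1`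
the separability idempotent) is idempotent, and its range (via the retraction
`e.rangeRestrict`) is a coequalizer of `ρ ⊗ id` and `id ⊗ λ`; hence it computes the
relative tensor product `V ⊗[A] W`. -/
theorem separable_frobenius_relative_tensor_product.{u}
    {k : Type*} [Field k] {A : Type*} [Ring A] [Algebra k A]
    (s : A →ₗ[k] A ⊗[k] A) (δ : A →ₗ[k] k)
    (hcoassoc : (TensorProduct.assoc k A A A).toLinearMap ∘ₗ s.rTensor A ∘ₗ s
      = LinearMap.lTensor A s ∘ₗ s)
    (hcounitl : ∀ x : A, (TensorProduct.lid k A) ((δ.rTensor A) (s x)) = x)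
    (hcounitr : ∀ x : A, (TensorProduct.rid k A) ((LinearMap.lTensor A δ) (s x)) = x)
    (hbim : ∀ x y : A, s x * ((1 : A) ⊗ₜ[k] y) = s (x * y) ∧ s (x * y) = (x ⊗ₜ[k] (1 : A)) * s y)
    (hsep : ∀ x : A, LinearMap.mul' k A (s x) = x)
    {V W : Type*} [AddCommGroup V] [Module k V] [AddCommGroup W] [Module k W]
    (ρ : V ⊗[k] A →ₗ[k] V) (lam : A ⊗[k] W →ₗ[k] W)
    (hρ1 : ∀ v : V, ρ (v ⊗ₜ[k] (1 : A)) = v)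
    (hρ2 : ∀ (v : V) (a b : A), ρ (ρ (v ⊗ₜ[k] a) ⊗ₜ[k] b) = ρ (v ⊗ₜ[k] (a * b)))
    (hlam1 : ∀ w : W, lam ((1 : A) ⊗ₜ[k] w) = w)
    (hlam2 : ∀ (a b : A) (w : W), lam (a ⊗ₜ[k] lam (b ⊗ₜ[k] w)) = lam ((a * b) ⊗ₜ[k] w))
    (e : V ⊗[k] W →ₗ[k] V ⊗[k] W)
    (he : ∀ (v : V) (w : W), e (v ⊗ₜ[k] w) =
      (TensorProduct.map (ρ ∘ₗ TensorProduct.mk k V A v)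
        (lam ∘ₗ (TensorProduct.mk k A W).flip w)) (s 1)) :
    (e ∘ₗ e = e) ∧
    (e.rangeRestrict ∘ₗ
        (TensorProduct.map ρ (LinearMap.id : W →ₗ[k] W) ∘ₗ
          (TensorProduct.assoc k V A W).symm.toLinearMap)
      = e.rangeRestrict ∘ₗ LinearMap.lTensor V lam) ∧
    (∀ (Q : Type u) [AddCommGroup Q] [Module k Q] (q : V ⊗[k] W →ₗ[k] Q),
      q ∘ₗ (TensorProduct.map ρ (LinearMap.id : W →ₗ[k] W) ∘ₗ
          (TensorProduct.assoc k V A W).symm.toLinearMap)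
        = q ∘ₗ LinearMap.lTensor V lam →
      ∃! q' : ↥(LinearMap.range e) →ₗ[k] Q, q' ∘ₗ e.rangeRestrict = q) := by
  classical
  -- Key lemma: `e ((v·x) ⊗ (y·w)) = T_{v,w} (s (x*y))`.
  have key : ∀ (v : V) (w : W) (x y : A),
      e (ρ (v ⊗ₜ[k] x) ⊗ₜ[k] lam (y ⊗ₜ[k] w)) =
      (TensorProduct.map (ρ ∘ₗ TensorProduct.mk k V A v)
        (lam ∘ₗ (TensorProduct.mk k A W).flip w)) (s (x * y)) := by
    intro v w x y
    rw [he]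
    have hmove : ∀ z : A ⊗[k] A,
        (TensorProduct.map (ρ ∘ₗ TensorProduct.mk k V A (ρ (v ⊗ₜ[k] x)))
          (lam ∘ₗ (TensorProduct.mk k A W).flip (lam (y ⊗ₜ[k] w)))) z =
        (TensorProduct.map (ρ ∘ₗ TensorProduct.mk k V A v)
          (lam ∘ₗ (TensorProduct.mk k A W).flip w))
          ((x ⊗ₜ[k] (1 : A)) * z * ((1 : A) ⊗ₜ[k] y)) := by
      intro z
      induction z using TensorProduct.induction_on with
      | zero => simp
      | tmul c d =>
          simp [Algebra.TensorProduct.tmul_mul_tmul, hρ2, hlam2]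
      | add z1 z2 h1 h2 => simp [mul_add, add_mul, h1, h2]
    rw [hmove]
    congr 1
    rw [mul_assoc, (hbim 1 y).1, one_mul, ← (hbim x y).2]
  -- Idempotence on pure tensors.
  have he2 : ∀ (v : V) (w : W), e (e (v ⊗ₜ[k] w)) = e (v ⊗ₜ[k] w) := by
    intro v w
    rw [he v w]
    have step : ∀ z : A ⊗[k] A,
        e ((TensorProduct.map (ρ ∘ₗ TensorProduct.mk k V A v)
          (lam ∘ₗ (TensorProduct.mk k A W).flip w)) z) =
        (TensorProduct.map (ρ ∘ₗ TensorProduct.mk k V A v)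
          (lam ∘ₗ (TensorProduct.mk k A W).flip w)) (s (LinearMap.mul' k A z)) := by
      intro z
      induction z using TensorProduct.induction_on with
      | zero => simp
      | tmul x y => simpa using key v w x y
      | add z1 z2 h1 h2 => simp [h1, h2]
    rw [step, hsep, ← he]
  -- Coequalizing on pure tensors.
  have h2core : ∀ (v : V) (a : A) (w : W),
      e (ρ (v ⊗ₜ[k] a) ⊗ₜ[k] w) = e (v ⊗ₜ[k] lam (a ⊗ₜ[k] w)) := by
    intro v a w
    calc e (ρ (v ⊗ₜ[k] a) ⊗ₜ[k] w)
        = e (ρ (v ⊗ₜ[k] a) ⊗ₜ[k] lam ((1 : A) ⊗ₜ[k] w)) := by rw [hlam1]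
      _ = (TensorProduct.map (ρ ∘ₗ TensorProduct.mk k V A v)
            (lam ∘ₗ (TensorProduct.mk k A W).flip w)) (s (a * 1)) := key v w a 1
      _ = (TensorProduct.map (ρ ∘ₗ TensorProduct.mk k V A v)
            (lam ∘ₗ (TensorProduct.mk k A W).flip w)) (s (1 * a)) := by
            rw [mul_one, one_mul]
      _ = e (ρ (v ⊗ₜ[k] (1 : A)) ⊗ₜ[k] lam (a ⊗ₜ[k] w)) := (key v w 1 a).symm
      _ = e (v ⊗ₜ[k] lam (a ⊗ₜ[k] w)) := by rw [hρ1]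
  refine ⟨TensorProduct.ext' fun v w => he2 v w, ?_, ?_⟩
  · apply TensorProduct.ext'
    intro v t
    induction t using TensorProduct.induction_on with
    | zero => simp
    | tmul a w =>
        apply Subtype.ext
        simpa using h2core v a w
    | add t1 t2 h1 h2 => simp only [tmul_add, map_add, h1, h2]
  · intro Q _ _ q hq
    have hqe : ∀ (v : V) (w : W), q (e (v ⊗ₜ[k] w)) = q (v ⊗ₜ[k] w) := by
      intro v w
      rw [he]
      have step : ∀ z : A ⊗[k] A,
          q ((TensorProduct.map (ρ ∘ₗ TensorProduct.mk k V A v)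
            (lam ∘ₗ (TensorProduct.mk k A W).flip w)) z) =
          q (v ⊗ₜ[k] lam ((LinearMap.mul' k A z) ⊗ₜ[k] w)) := by
        intro z
        induction z using TensorProduct.induction_on with
        | zero => simp
        | tmul x y =>
            have h := LinearMap.congr_fun hq (v ⊗ₜ[k] (x ⊗ₜ[k] lam (y ⊗ₜ[k] w)))
            simp only [LinearMap.comp_apply, LinearEquiv.coe_coe,
              TensorProduct.assoc_symm_tmul, TensorProduct.map_tmul,
              LinearMap.id_coe, id_eq, LinearMap.lTensor_tmul] at h
            simpa [hlam2] using h
        | add z1 z2 h1 h2 =>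
            simp only [map_add, add_tmul, tmul_add, h1, h2]
      rw [step, hsep, hlam1]
    have hqcomp : q ∘ₗ e = q := TensorProduct.ext' fun v w => hqe v w
    refine ⟨q ∘ₗ (LinearMap.range e).subtype, ?_, ?_⟩
    · show (q ∘ₗ (LinearMap.range e).subtype) ∘ₗ e.rangeRestrict = q
      rw [LinearMap.comp_assoc, LinearMap.subtype_comp_codRestrict, hqcomp]
    · intro y hy
      apply LinearMap.ext
      intro x
      obtain ⟨u, rfl⟩ := e.surjective_rangeRestrict x
      calc y (e.rangeRestrict u) = (y ∘ₗ e.rangeRestrict) u := rfl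
        _ = q u := by rw [hy]
        _ = (q ∘ₗ e) u := (LinearMap.congr_fun hqcomp u).symm
        _ = (q ∘ₗ (LinearMap.range e).subtype) (e.rangeRestrict u) := rfl
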